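/- Let w be a random vector in ℝ^d such that E[cos(wᵀδ)] = k(δ) for every δ ∈ ℝ^d, where k : ℝ^d → ℝ, and let b be uniformly distributed on [0, 2π] and independent of w. Then for all x, y ∈ ℝ^d, E[ 2 cos(wᵀx + b) cos(wᵀy + b) ] = k(x − y). In particular, the random Fourier feature products (1/m) Σ_{i=1}^m 2 cos(w_iᵀx + b_i) cos(w_iᵀy + b_i), with (w_i, b_i) i.i.d. copies of (w, b), are unbiased estimators of the shift-invariant kernel value k(x − y). -/

import Mathlib

/-!
By product-to-sum, `2 cos (wᵀx + b) cos (wᵀy + b) = cos (wᵀ(x - y)) + cos (wᵀ(x + y) + 2b)`.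
The first term has mean `k (x - y)`. The second has mean zero: expanding `cos (s + 2b)` and
using the independence of `w` and `b`, it reduces to the means of `cos 2b` and `sin 2b`, which
vanish because `b` is uniform over a whole period. Each summand of the average is distributed
like the single feature product, so the average has the same mean.
-/

open MeasureTheory ProbabilityTheory Real
open scoped Matrix

section UniformPhase

variable {Ω : Type*} [MeasurableSpace Ω] {μ : Measure Ω} {b : Ω → ℝ}

lemma integral_comp_of_map_eq_uniform (hb : Measurable b)
    (hbunif : Measure.map b μ =
      (ENNReal.ofReal (2 * π))⁻¹ • volume.restrict (Set.Icc 0 (2 * π)))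
    {g : ℝ → ℝ} (hg : Measurable g) :
    ∫ ω, g (b ω) ∂μ = (2 * π)⁻¹ * ∫ t in 0..2 * π, g t := by
  rw [← integral_map hb.aemeasurable hg.aestronglyMeasurable, hbunif, integral_smul_measure,
    integral_Icc_eq_integral_Ioc, ← intervalIntegral.integral_of_le two_pi_pos.le,
    ENNReal.toReal_inv, ENNReal.toReal_ofReal two_pi_pos.le, smul_eq_mul]

lemma integral_cos_two_mul_eq_zero_of_map_eq_uniform (hb : Measurable b)
    (hbunif : Measure.map b μ =
      (ENNReal.ofReal (2 * π))⁻¹ • volume.restrict (Set.Icc 0 (2 * π))) :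
    ∫ ω, cos (2 * b ω) ∂μ = 0 := by
  rw [integral_comp_of_map_eq_uniform hb hbunif (g := fun t => cos (2 * t)) (by fun_prop),
    intervalIntegral.integral_comp_mul_left cos two_ne_zero, integral_cos]
  simp [sin_two_mul]

lemma integral_sin_two_mul_eq_zero_of_map_eq_uniform (hb : Measurable b)
    (hbunif : Measure.map b μ =
      (ENNReal.ofReal (2 * π))⁻¹ • volume.restrict (Set.Icc 0 (2 * π))) :
    ∫ ω, sin (2 * b ω) ∂μ = 0 := by
  rw [integral_comp_of_map_eq_uniform hb hbunif (g := fun t => sin (2 * t)) (by fun_prop),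
    intervalIntegral.integral_comp_mul_left sin two_ne_zero, integral_sin]
  norm_num [cos_two_mul]

lemma integral_cos_add_two_mul_eq_zero_of_indepFun [IsFiniteMeasure μ] {X : Ω → ℝ}
    (hX : Measurable X) (hb : Measurable b)
    (hbunif : Measure.map b μ =
      (ENNReal.ofReal (2 * π))⁻¹ • volume.restrict (Set.Icc 0 (2 * π)))
    (hXb : IndepFun X b μ) :
    ∫ ω, cos (X ω + 2 * b ω) ∂μ = 0 := by
  have integral_mul_factorizes {f g : ℝ → ℝ} (hf : Measurable f) (hg : Measurable g) :
      ∫ ω, f (X ω) * g (2 * b ω) ∂μ = (∫ ω, f (X ω) ∂μ) * ∫ ω, g (2 * b ω) ∂μ :=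
    (hXb.comp hf (hg.comp (measurable_const.mul measurable_id))).integral_fun_mul_eq_mul_integral
      (hf.comp hX).aestronglyMeasurable (hg.comp (hb.const_mul 2)).aestronglyMeasurable
  have bounded_integrable {f g : ℝ → ℝ} (hf : Measurable f) (hg : Measurable g)
      (hf1 : ∀ t, |f t| ≤ 1) (hg1 : ∀ t, |g t| ≤ 1) :
      Integrable (fun ω => f (X ω) * g (2 * b ω)) μ :=
    .of_bound ((hf.comp hX).mul (hg.comp (hb.const_mul 2))).aestronglyMeasurable 1
      (ae_of_all _ fun ω => by
        simpa [abs_mul] using mul_le_one₀ (hf1 _) (abs_nonneg _) (hg1 _))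
  simp_rw [cos_add]
  rw [integral_sub (bounded_integrable measurable_cos measurable_cos abs_cos_le_one abs_cos_le_one)
      (bounded_integrable measurable_sin measurable_sin abs_sin_le_one abs_sin_le_one),
    integral_mul_factorizes measurable_cos measurable_cos, integral_mul_factorizes measurable_sin measurable_sin,
    integral_cos_two_mul_eq_zero_of_map_eq_uniform hb hbunif,
    integral_sin_two_mul_eq_zero_of_map_eq_uniform hb hbunif]
  ring

end UniformPhase

lemma integral_two_mul_cos_mul_cos_add_random_phase {Ω ι : Type*} [MeasurableSpace Ω]
    {μ : Measure Ω} [IsFiniteMeasure μ] [Fintype ι] {w : Ω → ι → ℝ} {b : Ω → ℝ}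
    (hw : Measurable w) (hb : Measurable b)
    (hbunif : Measure.map b μ =
      (ENNReal.ofReal (2 * π))⁻¹ • volume.restrict (Set.Icc 0 (2 * π)))
    (hindep : IndepFun w b μ) (x y : ι → ℝ) :
    ∫ ω, 2 * cos (w ω ⬝ᵥ x + b ω) * cos (w ω ⬝ᵥ y + b ω) ∂μ = ∫ ω, cos (w ω ⬝ᵥ (x - y)) ∂μ := by
  have product_to_sum (ω : Ω) : 2 * cos (w ω ⬝ᵥ x + b ω) * cos (w ω ⬝ᵥ y + b ω) =
      cos (w ω ⬝ᵥ (x - y)) + cos (w ω ⬝ᵥ (x + y) + 2 * b ω) := by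
    rw [two_mul_cos_mul_cos, dotProduct_sub, dotProduct_add]
    ring_nf
  have cos_integrable {f : Ω → ℝ} (hf : Measurable f) : Integrable (fun ω => cos (f ω)) μ :=
    .of_bound hf.cos.aestronglyMeasurable 1 (ae_of_all _ fun ω => abs_cos_le_one _)
  have oscillating_term_vanishes : ∫ ω, cos (w ω ⬝ᵥ (x + y) + 2 * b ω) ∂μ = 0 :=
    integral_cos_add_two_mul_eq_zero_of_indepFun (by fun_prop) hb hbunif
      (hindep.comp (φ := fun v => v ⬝ᵥ (x + y)) (by fun_prop) measurable_id)
  simp_rw [product_to_sum]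
  rw [integral_add (cos_integrable (by fun_prop)) (cos_integrable (by fun_prop)),
    oscillating_term_vanishes, add_zero]

lemma integral_inv_card_mul_sum_of_identDistrib {Ω ι : Type*} [MeasurableSpace Ω]
    {μ : Measure Ω} [Fintype ι] [Nonempty ι] {f : ι → Ω → ℝ} {g : Ω → ℝ}
    (hf : ∀ i, IdentDistrib (f i) g μ μ) (hg : Integrable g μ) :
    ∫ ω, (Fintype.card ι : ℝ)⁻¹ * ∑ i, f i ω ∂μ = ∫ ω, g ω ∂μ := by
  rw [integral_const_mul, integral_finsetSum _ fun i _ => (hf i).integrable_iff.mpr hg]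
  simp [(hf _).integral_eq]

theorem random_fourier_features_unbiased_general
    {Ω : Type*} [MeasurableSpace Ω] {μ : Measure Ω} [IsProbabilityMeasure μ]
    {d : ℕ} (w : Ω → Fin d → ℝ) (b : Ω → ℝ)
    (hw : Measurable w) (hb : Measurable b)
    (hbunif : Measure.map b μ =
      (ENNReal.ofReal (2 * Real.pi))⁻¹ • volume.restrict (Set.Icc 0 (2 * Real.pi)))
    (hindep : IndepFun w b μ)
    (k : (Fin d → ℝ) → ℝ)
    (hk : ∀ δ : Fin d → ℝ, ∫ ω, Real.cos (∑ j, w ω j * δ j) ∂μ = k δ)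
    {m : ℕ} (hm : 0 < m) (W : Fin m → Ω → Fin d → ℝ) (B : Fin m → Ω → ℝ)
    (hiid : ∀ i, IdentDistrib (fun ω => (W i ω, B i ω)) (fun ω => (w ω, b ω)) μ μ) :
    ∀ x y : Fin d → ℝ,
      (∫ ω, 2 * Real.cos (∑ j, w ω j * x j + b ω) *
          Real.cos (∑ j, w ω j * y j + b ω) ∂μ = k (x - y)) ∧
      ∫ ω, (m : ℝ)⁻¹ * ∑ i, 2 * Real.cos (∑ j, W i ω j * x j + B i ω) *
          Real.cos (∑ j, W i ω j * y j + B i ω) ∂μ = k (x - y) := by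
  intro x y
  set feature_product : (Fin d → ℝ) × ℝ → ℝ :=
    fun p => 2 * cos (p.1 ⬝ᵥ x + p.2) * cos (p.1 ⬝ᵥ y + p.2)
  have single : ∫ ω, feature_product (w ω, b ω) ∂μ = k (x - y) :=
    (integral_two_mul_cos_mul_cos_add_random_phase hw hb hbunif hindep x y).trans (hk _)
  have hmeas : Measurable feature_product := by fun_prop
  have integrable_feature_product : Integrable (fun ω => feature_product (w ω, b ω)) μ := by
    refine .of_bound (hmeas.comp (hw.prodMk hb)).aestronglyMeasurable 2 (ae_of_all _ fun ω => ?_)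
    calc ‖feature_product (w ω, b ω)‖
        = 2 * |cos (w ω ⬝ᵥ x + b ω)| * |cos (w ω ⬝ᵥ y + b ω)| := by
          simp [feature_product]
      _ ≤ 2 * 1 * 1 := by gcongr <;> exact abs_cos_le_one _
      _ = 2 := by ring
  have : Nonempty (Fin m) := ⟨⟨0, hm⟩⟩
  have average := integral_inv_card_mul_sum_of_identDistrib
    (fun i => (hiid i).comp hmeas) integrable_feature_product
  rw [Fintype.card_fin] at average
  exact ⟨single, average.trans single⟩

/-- **Random Fourier features are unbiased (Section 2.1 of the paper).**
Let `w` be a random vector in `ℝ^d` with `E[cos (wᵀ δ)] = k δ` for all `δ`, and let `b`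
be uniform on `[0, 2π]` and independent of `w`.  Then for all `x, y`,
`E[2 cos (wᵀ x + b) cos (wᵀ y + b)] = k (x − y)`; in particular, averages
`(1/m) ∑ i, 2 cos (wᵢᵀ x + bᵢ) cos (wᵢᵀ y + bᵢ)` over i.i.d. copies `(wᵢ, bᵢ)` of
`(w, b)` are unbiased estimators of the shift-invariant kernel value `k (x − y)`. -/
theorem random_fourier_features_unbiased
    {Ω : Type*} [MeasurableSpace Ω] {μ : Measure Ω} [IsProbabilityMeasure μ]
    {d : ℕ} (w : Ω → Fin d → ℝ) (b : Ω → ℝ)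
    (hw : Measurable w) (hb : Measurable b)
    (hbunif : Measure.map b μ =
      (ENNReal.ofReal (2 * Real.pi))⁻¹ • volume.restrict (Set.Icc 0 (2 * Real.pi)))
    (hindep : IndepFun w b μ)
    (k : (Fin d → ℝ) → ℝ)
    (hk : ∀ δ : Fin d → ℝ, ∫ ω, Real.cos (∑ j, w ω j * δ j) ∂μ = k δ)
    {m : ℕ} (hm : 0 < m) (W : Fin m → Ω → Fin d → ℝ) (B : Fin m → Ω → ℝ)
    (hWmeas : ∀ i, Measurable (W i)) (hBmeas : ∀ i, Measurable (B i))
    (hiid : ∀ i, IdentDistrib (fun ω => (W i ω, B i ω)) (fun ω => (w ω, b ω)) μ μ)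
    (hWBindep : iIndepFun (fun i ω => (W i ω, B i ω)) μ) :
    ∀ x y : Fin d → ℝ,
      (∫ ω, 2 * Real.cos (∑ j, w ω j * x j + b ω) *
          Real.cos (∑ j, w ω j * y j + b ω) ∂μ = k (x - y)) ∧
      ∫ ω, (m : ℝ)⁻¹ * ∑ i, 2 * Real.cos (∑ j, W i ω j * x j + B i ω) *
          Real.cos (∑ j, W i ω j * y j + B i ω) ∂μ = k (x - y) :=
  random_fourier_features_unbiased_general w b hw hb hbunif hindep k hk hm W B hiid
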